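/- Let k be a field and consider the 2-dimensional representation V = k² of the free algebra on two generators given by the matrices π(e_1) = [[0,1],[0,1]] and π(e_2) = [[0,1],[0,0]] (acting on column vectors). Then V is full (it has no proper complete submodule other than possibly {0}, and {0} is not complete) but degenerate (ker π(e_1) ∩ ker π(e_2) ≠ {0}). -/
import Mathlib


/-- The action of a word `p` (a list of generator indices) on a representation of the
free algebra on `n` generators given by the endomorphisms `T i`: the first letter acts first. -/
def actWord {k V : Type*} [Field k] [AddCommGroup V] [Module k V] {n : ℕ}
    (T : Fin n → V →ₗ[k] V) : List (Fin n) → V →ₗ[k] V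
  | [] => LinearMap.id
  | i :: p => (actWord T p).comp (T i)

/-- A subspace is invariant under the action of each generator. -/
def RepInvariant {k V : Type*} [Field k] [AddCommGroup V] [Module k V] {n : ℕ}
    (T : Fin n → V →ₗ[k] V) (W : Submodule k V) : Prop :=
  ∀ i : Fin n, ∀ w ∈ W, T i w ∈ W

/-- A submodule `W ⊆ V` is complete: every `v ∈ V` is sent into `W` by all sufficiently
long words. -/
def RepComplete {k V : Type*} [Field k] [AddCommGroup V] [Module k V] {n : ℕ}
    (T : Fin n → V →ₗ[k] V) (W : Submodule k V) : Prop :=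
  ∀ v : V, ∃ m : ℕ, 1 ≤ m ∧ ∀ p : List (Fin n), m ≤ p.length → actWord T p v ∈ W

lemma actWord_append {k V : Type*} [Field k] [AddCommGroup V] [Module k V] {n : ℕ}
    (T : Fin n → V →ₗ[k] V) (p q : List (Fin n)) (v : V) :
    actWord T (p ++ q) v = actWord T q (actWord T p v) := by
  induction p generalizing v with
  | nil => simp [actWord]
  | cons i p ih => simp [actWord, ih]

/-- An explicit two-dimensional representation that is full but degenerate. -/
theorem stmt12 {k : Type*} [Field k] :
    ∀ T : Fin 2 → (Fin 2 → k) →ₗ[k] (Fin 2 → k),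
    T = ![(!![(0:k), 1; 0, 1]).mulVecLin, (!![(0:k), 1; 0, 0]).mulVecLin] →
    (∀ W : Submodule k (Fin 2 → k), RepInvariant T W → RepComplete T W → W = ⊤) ∧
      ¬ RepComplete T (⊥ : Submodule k (Fin 2 → k)) ∧
      LinearMap.ker (T 0) ⊓ LinearMap.ker (T 1) ≠ ⊥ := by
  intro T hT
  have h0 : ∀ v : Fin 2 → k, T 0 v = ![v 1, v 1] := by
    intro v
    subst hT
    ext i
    fin_cases i <;>
      simp [Matrix.mulVecLin_apply, Matrix.mulVec, dotProduct, Fin.sum_univ_two]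
  have h1 : ∀ v : Fin 2 → k, T 1 v = ![v 1, 0] := by
    intro v
    subst hT
    ext i
    fin_cases i <;>
      simp [Matrix.mulVecLin_apply, Matrix.mulVec, dotProduct, Fin.sum_univ_two]
  -- repeated T0 fixes (1,1)
  have hrep : ∀ m : ℕ, actWord T (List.replicate m 0) (![1, 1] : Fin 2 → k) = ![1, 1] := by
    intro m
    induction m with
    | zero => simp [actWord]
    | succ n ih =>
      rw [List.replicate_succ]
      show actWord T (List.replicate n 0) (T 0 ![1, 1]) = ![1, 1]
      rw [h0]
      simpa using ih
  have hrep01 : ∀ m : ℕ, actWord T (List.replicate (m + 1) 0) (![0, 1] : Fin 2 → k) = ![1, 1] := by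
    intro m
    rw [List.replicate_succ]
    show actWord T (List.replicate m 0) (T 0 ![0, 1]) = ![1, 1]
    rw [h0]
    simpa using hrep m
  refine ⟨?_, ?_, ?_⟩
  · -- full
    intro W _hinv hcomp
    obtain ⟨m, hm1, hm⟩ := hcomp ![0, 1]
    obtain ⟨n, rfl⟩ : ∃ n, m = n + 1 := ⟨m - 1, (Nat.succ_pred_eq_of_pos hm1).symm⟩
    have h11 : (![1, 1] : Fin 2 → k) ∈ W := by
      have := hm (List.replicate (n + 1) 0) (by simp)
      rwa [hrep01 n] at this
    have h10 : (![1, 0] : Fin 2 → k) ∈ W := by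
      have := hm (List.replicate (n + 1) 0 ++ [1]) (by simp)
      rw [actWord_append, hrep01 n] at this
      have e : actWord T [1] (![1, 1] : Fin 2 → k) = ![1, 0] := by
        show T 1 ![1, 1] = ![1, 0]
        rw [h1]; simp
      rwa [e] at this
    rw [eq_top_iff]
    intro v _
    have hv : v = v 0 • (![1, 0] : Fin 2 → k) + v 1 • (![1, 1] - ![1, 0]) := by
      ext i; fin_cases i <;> simp
    rw [hv]
    exact W.add_mem (W.smul_mem _ h10) (W.smul_mem _ (W.sub_mem h11 h10))
  · -- bot not complete
    intro hcomp
    obtain ⟨m, hm1, hm⟩ := hcomp ![0, 1]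
    obtain ⟨n, rfl⟩ : ∃ n, m = n + 1 := ⟨m - 1, (Nat.succ_pred_eq_of_pos hm1).symm⟩
    have := hm (List.replicate (n + 1) 0) (by simp)
    rw [hrep01 n, Submodule.mem_bot] at this
    have := congrFun this 0
    simp at this
  · -- degenerate
    intro hbot
    have hmem : (![1, 0] : Fin 2 → k) ∈ LinearMap.ker (T 0) ⊓ LinearMap.ker (T 1) := by
      constructor
      · rw [SetLike.mem_coe, LinearMap.mem_ker, h0]; ext i; fin_cases i <;> simp
      · rw [SetLike.mem_coe, LinearMap.mem_ker, h1]; ext i; fin_cases i <;> simp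
    rw [hbot, Submodule.mem_bot] at hmem
    have := congrFun hmem 0
    simp at this
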